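/- Let f ∈ ℂ[x_0,x_1,x_2]_d be concise with d ≥ 5 and rk(f) = 5, and suppose f admits a minimal apolar set of five points in ℙ^2 no four of which are collinear. Then f has a unique minimal apolar set of points. -/

import Mathlib

noncomputable section

open MvPolynomial

/-- The iterated partial-derivative operator `∂^α` acting on polynomials. -/
def diffOp {n : ℕ} (α : Fin n →₀ ℕ) (f : MvPolynomial (Fin n) ℂ) :
    MvPolynomial (Fin n) ℂ :=
  (List.finRange n).foldr (fun i h => (⇑(pderiv (R := ℂ) i))^[α i] h) f

/-- The apolar action `G ∘ f` of the dual polynomial ring `T` on `S`. -/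
def apolar {n : ℕ} (G f : MvPolynomial (Fin n) ℂ) : MvPolynomial (Fin n) ℂ :=
  ∑ α ∈ G.support, G.coeff α • diffOp α f

lemma apolar_eq_sum_subset {n : ℕ} (G f : MvPolynomial (Fin n) ℂ) (s : Finset (Fin n →₀ ℕ))
    (hs : G.support ⊆ s) : apolar G f = ∑ α ∈ s, G.coeff α • diffOp α f :=
  Finset.sum_subset hs fun x _ hx => by
    rw [MvPolynomial.notMem_support_iff.mp hx, zero_smul]

lemma apolar_zero {n : ℕ} (f : MvPolynomial (Fin n) ℂ) : apolar 0 f = 0 := by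
  simp [apolar]

lemma apolar_add {n : ℕ} (G G' f : MvPolynomial (Fin n) ℂ) :
    apolar (G + G') f = apolar G f + apolar G' f := by
  classical
  rw [apolar_eq_sum_subset (G + G') f (G.support ∪ G'.support) (MvPolynomial.support_add),
    apolar_eq_sum_subset G f (G.support ∪ G'.support) Finset.subset_union_left,
    apolar_eq_sum_subset G' f (G.support ∪ G'.support) Finset.subset_union_right,
    ← Finset.sum_add_distrib]
  exact Finset.sum_congr rfl fun α _ => by rw [coeff_add, add_smul]

lemma apolar_smul {n : ℕ} (c : ℂ) (G f : MvPolynomial (Fin n) ℂ) :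
    apolar (c • G) f = c • apolar G f := by
  rw [apolar_eq_sum_subset (c • G) f G.support MvPolynomial.support_smul, apolar,
    Finset.smul_sum]
  exact Finset.sum_congr rfl fun α _ => by rw [coeff_smul, smul_assoc]

/-- The apolar ideal `f^⊥`, as a set: all `G` with `G ∘ f = 0`. -/
def perpSet {n : ℕ} (f : MvPolynomial (Fin n) ℂ) : Set (MvPolynomial (Fin n) ℂ) :=
  {G | apolar G f = 0}

/-- The degree-`k` graded piece `f^⊥_k` of the apolar ideal, as a `ℂ`-submodule. -/
def perpSub {n : ℕ} (f : MvPolynomial (Fin n) ℂ) (k : ℕ) :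
    Submodule ℂ (MvPolynomial (Fin n) ℂ) where
  carrier := {G | G.IsHomogeneous k ∧ apolar G f = 0}
  zero_mem' := ⟨isHomogeneous_zero _ _ _, apolar_zero f⟩
  add_mem' := fun ha hb => ⟨ha.1.add hb.1, by rw [apolar_add, ha.2, hb.2, add_zero]⟩
  smul_mem' := fun c G hG =>
    ⟨by rw [smul_eq_C_mul]; simpa using (isHomogeneous_C _ c).mul hG.1,
     by rw [apolar_smul, hG.2, smul_zero]⟩

/-- The degree-`k` graded piece `f^⊥_k` of the apolar ideal, as a set. -/
def perpPiece {n : ℕ} (f : MvPolynomial (Fin n) ℂ) (k : ℕ) :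
    Set (MvPolynomial (Fin n) ℂ) := (perpSub f k : Set _)

/-- Hilbert function of the apolar algebra `A_f = T/f^⊥` in degree `k`:
`HF_{A_f}(k) = dim T_k − dim f^⊥_k`. -/
def HF {n : ℕ} (f : MvPolynomial (Fin n) ℂ) (k : ℕ) : ℕ :=
  Module.finrank ℂ (homogeneousSubmodule (Fin n) ℂ k) - Module.finrank ℂ (perpSub f k)

/-- The differential length `ℓ(f) = max_k HF_{A_f}(k)`. -/
def ell {n : ℕ} (f : MvPolynomial (Fin n) ℂ) : ℕ := sSup (Set.range (HF f))

/-- Complex projective `n`-space `ℙ^n(ℂ)`. -/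
abbrev Pt (n : ℕ) := Projectivization ℂ (Fin (n + 1) → ℂ)

/-- Degree-`k` graded piece of an ideal, as a set. -/
def idealPiece {n : ℕ} (I : Ideal (MvPolynomial (Fin n) ℂ)) (k : ℕ) :
    Set (MvPolynomial (Fin n) ℂ) := {G | G.IsHomogeneous k ∧ G ∈ I}

/-- The homogeneous vanishing ideal `I_X` of a set of projective points. -/
def vanishingIdeal {n : ℕ} (A : Set (Pt n)) : Ideal (MvPolynomial (Fin (n + 1)) ℂ) :=
  Ideal.span {G | (∃ k, G.IsHomogeneous k) ∧ ∀ p ∈ A, eval p.rep G = 0}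

/-- The linear form with coefficient vector `a`. -/
def lin {n : ℕ} (a : Fin (n + 1) → ℂ) : MvPolynomial (Fin (n + 1)) ℂ :=
  ∑ i, C (a i) * X i

/-- The linear form `ℓ_ξ` attached to a projective point `ξ`. -/
def linOf {n : ℕ} (p : Pt n) : MvPolynomial (Fin (n + 1)) ℂ := lin p.rep

/-- Waring rank: the least `r` such that `f` is a sum of `r` `d`-th powers of linear forms. -/
def wrank {n : ℕ} (d : ℕ) (f : MvPolynomial (Fin (n + 1)) ℂ) : ℕ :=
  sInf {r | ∃ a : Fin r → (Fin (n + 1) → ℂ), f = ∑ i, lin (a i) ^ d}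

/-- `A` is apolar to `f`, i.e. `I_A ⊆ f^⊥`. -/
def isApolar {n : ℕ} (f : MvPolynomial (Fin (n + 1)) ℂ) (A : Set (Pt n)) : Prop :=
  ∀ G ∈ vanishingIdeal A, apolar G f = 0

/-- `A` is a minimal apolar set of `f ∈ S_d`: a finite apolar set of cardinality `rk f`. -/
def isMinApolar {n : ℕ} (d : ℕ) (f : MvPolynomial (Fin (n + 1)) ℂ) (A : Set (Pt n)) : Prop :=
  A.Finite ∧ isApolar f A ∧ A.ncard = wrank d f

/-- The Waring locus of `f`: points belonging to some minimal apolar set. -/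
def waringLocus {n : ℕ} (d : ℕ) (f : MvPolynomial (Fin (n + 1)) ℂ) : Set (Pt n) :=
  {p | ∃ A, isMinApolar d f A ∧ p ∈ A}

open Classical in
/-- The regularity (interpolation degree) `ρ(A)` of a set of points: the least `k` admitting
degree-`k` interpolation forms `U_p` with `U_p(q) = δ_{pq}`. -/
def interpReg {n : ℕ} (A : Set (Pt n)) : ℕ :=
  sInf {k | ∃ U : Pt n → MvPolynomial (Fin (n + 1)) ℂ,
    ∀ p ∈ A, (U p).IsHomogeneous k ∧ ∀ q ∈ A, eval q.rep (U p) = if q = p then 1 else 0}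

/-- Zero locus in projective space of a set of (homogeneous) polynomials. -/
def zeroLocus {n : ℕ} (S : Set (MvPolynomial (Fin (n + 1)) ℂ)) : Set (Pt n) :=
  {p | ∀ G ∈ S, eval p.rep G = 0}

/-- `W` is Zariski dense in `Z`: every homogeneous form vanishing on `W` vanishes on `Z`. -/
def denseIn {n : ℕ} (W Z : Set (Pt n)) : Prop :=
  ∀ G : MvPolynomial (Fin (n + 1)) ℂ, (∃ k, G.IsHomogeneous k) →
    (∀ p ∈ W, eval p.rep G = 0) → ∀ p ∈ Z, eval p.rep G = 0

/-- The coordinate point with `1` in position `i` and `0` elsewhere. -/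
def basePt (n : ℕ) (i : Fin (n + 1)) : Pt n :=
  Projectivization.mk ℂ (Pi.single i 1) (by
    intro h
    have := congrFun h i
    simp at this)

/-- Three projective points are collinear: their representatives are linearly dependent. -/
def collin3 {n : ℕ} (p q r : Pt n) : Prop := ¬ LinearIndependent ℂ ![p.rep, q.rep, r.rep]

/-- A Zariski-closed subset of `ℙ^n`: the common zero locus of a family of homogeneous forms. -/
def zClosed {n : ℕ} (Z : Set (Pt n)) : Prop :=
  ∃ S : Set (MvPolynomial (Fin (n + 1)) ℂ),
    (∀ G ∈ S, ∃ k, G.IsHomogeneous k) ∧ Z = zeroLocus S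

/-- `W` is Zariski dense in `Z`: every Zariski-closed set containing `W` contains `Z`. -/
def zDense {n : ℕ} (W Z : Set (Pt n)) : Prop :=
  ∀ Zc : Set (Pt n), zClosed Zc → W ⊆ Zc → Z ⊆ Zc

/-- An irreducible Zariski-closed set: nonempty and not the union of two proper closed
subsets of itself. -/
def zIrred {n : ℕ} (Z : Set (Pt n)) : Prop :=
  Z.Nonempty ∧ ∀ Z₁ Z₂ : Set (Pt n), zClosed Z₁ → zClosed Z₂ → Z₁ ⊆ Z → Z₂ ⊆ Z →
    Z = Z₁ ∪ Z₂ → Z₁ = Z ∨ Z₂ = Z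

/-- `P` lies in the projective linear span of `r` points of `Xv`. -/
def xRankLe {n : ℕ} (Xv : Set (Pt n)) (P : Pt n) (r : ℕ) : Prop :=
  ∃ Q : Fin r → Pt n, (∀ i, Q i ∈ Xv) ∧
    P.rep ∈ Submodule.span ℂ (Set.range fun i => (Q i).rep)

/-- The `X`-rank of a point `P` (with value `+∞` if `P` is in no finite span). -/
def xRank {n : ℕ} (Xv : Set (Pt n)) (P : Pt n) : ℕ∞ :=
  sInf {r : ℕ∞ | ∃ m : ℕ, r = (m : ℕ∞) ∧ xRankLe Xv P m}

/-- `Xv` spans `ℙ^n`: every point is in the span of finitely many points of `Xv`. -/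
def spansAll {n : ℕ} (Xv : Set (Pt n)) : Prop := ∀ P : Pt n, ∃ m, xRankLe Xv P m

/-- The generic `X`-rank: the least `r` such that points of `X`-rank `≤ r` are dense. -/
def genXRank {n : ℕ} (Xv : Set (Pt n)) : ℕ :=
  sInf {m : ℕ | zDense {P | xRankLe Xv P m} Set.univ}

/-- The `X`-decomposition locus of `P`, where `r = rk_X(P)`. -/
def decompLocus {n : ℕ} (Xv : Set (Pt n)) (P : Pt n) (r : ℕ) : Set (Pt n) :=
  {Q | Q ∈ Xv ∧ ∃ Q' : Fin (r - 1) → Pt n, (∀ i, Q' i ∈ Xv) ∧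
    P.rep ∈ Submodule.span ℂ (insert Q.rep (Set.range fun i => (Q' i).rep))}

/-- Zariski density in the affine space `ℂ^ι`: every polynomial function vanishing on `W`
vanishes on `Z`. -/
def zDenseAff {ι : Type} (W Z : Set (ι → ℂ)) : Prop :=
  ∀ P : MvPolynomial ι ℂ, (∀ w ∈ W, MvPolynomial.eval w P = 0) →
    ∀ z ∈ Z, MvPolynomial.eval z P = 0

/-- The generic Waring rank of degree-`d` forms in `n+1` variables: the least `r` such that
forms of rank `≤ r` are Zariski dense in `S_d` (viewed in coefficient space). -/
def genWaringRank (n d : ℕ) : ℕ :=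
  sInf {r : ℕ | zDenseAff
    {φ : (Fin (n + 1) →₀ ℕ) → ℂ | ∃ f : MvPolynomial (Fin (n + 1)) ℂ,
      f.IsHomogeneous d ∧ wrank d f ≤ r ∧ φ = fun m => coeff m f}
    {φ : (Fin (n + 1) →₀ ℕ) → ℂ | ∃ f : MvPolynomial (Fin (n + 1)) ℂ,
      f.IsHomogeneous d ∧ φ = fun m => coeff m f}}


/-!
Both minimal apolar sets `X` and `B` give Waring decompositions
`f = ∑ a_x ℓ_x^d = ∑ b_y ℓ_y^d` with all coefficients nonzero, and pairing with a form `G` of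
degree `d` turns this into `∑ a_x G(x) = ∑ b_y G(y)`. A set of at most `2k` points, no `k + 1`
of them on a line through `z`, is covered by `k` lines missing `z`. So if no four points of `B`
are collinear, a point `z ∈ B \ X` is separated from the other points of `X ∪ B` by five lines
(three for `X`, two for `B \ {z}`), and pairing gives `b_z = 0`; hence `B ⊆ X`.
If four points of `B` lie on a line `L`, conciseness puts the fifth point `y` off `L`, and
applying `L` to both decompositions equates the single power `ℓ_y^(d-1)` with a combination of
at least two powers `ℓ_x^(d-1)`, `x ∈ X`, which the same separation argument in degree `d - 1`
rules out.
-/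

open scoped Classical

section ApolarAction

variable {n : ℕ}

def diffOpLinear (α : Fin n →₀ ℕ) : Module.End ℂ (MvPolynomial (Fin n) ℂ) :=
  ((List.finRange n).map fun i => (pderiv i).toLinearMap ^ α i).prod

lemma diffOp_eq_diffOpLinear (α : Fin n →₀ ℕ) (f : MvPolynomial (Fin n) ℂ) :
    diffOp α f = diffOpLinear α f := by
  rw [diffOp, diffOpLinear]
  induction List.finRange n with
  | nil => rfl
  | cons i l ih => simp [ih, Module.End.pow_apply]

def apolarLinear (G : MvPolynomial (Fin n) ℂ) : Module.End ℂ (MvPolynomial (Fin n) ℂ) :=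
  ∑ α ∈ G.support, G.coeff α • diffOpLinear α

lemma apolar_eq_apolarLinear (G f : MvPolynomial (Fin n) ℂ) :
    apolar G f = apolarLinear G f := by
  simp [apolar, apolarLinear, diffOp_eq_diffOpLinear, LinearMap.sum_apply]

lemma apolar_sum_right {ι : Type*} (G : MvPolynomial (Fin n) ℂ) (s : Finset ι)
    (g : ι → MvPolynomial (Fin n) ℂ) : apolar G (∑ j ∈ s, g j) = ∑ j ∈ s, apolar G (g j) := by
  simp only [apolar_eq_apolarLinear, map_sum]

lemma apolar_smul_right (G : MvPolynomial (Fin n) ℂ) (c : ℂ) (g : MvPolynomial (Fin n) ℂ) :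
    apolar G (c • g) = c • apolar G g := by
  simp only [apolar_eq_apolarLinear, map_smul]

lemma apolar_sum_left {ι : Type*} (s : Finset ι) (G : ι → MvPolynomial (Fin n) ℂ)
    (f : MvPolynomial (Fin n) ℂ) : apolar (∑ j ∈ s, G j) f = ∑ j ∈ s, apolar (G j) f :=
  map_sum (AddMonoidHom.mk' (apolar · f) (apolar_add · · f)) G s

lemma iterate_pderiv_monomial (i : Fin n) (t : ℕ) (β : Fin n →₀ ℕ) (c : ℂ) :
    (pderiv i)^[t] (monomial β c) =
      monomial (β - Finsupp.single i t) ((β i).descFactorial t * c) := by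
  induction t with
  | zero => simp
  | succ t ih =>
    rw [Function.iterate_succ_apply', ih, pderiv_monomial, tsub_tsub, ← Finsupp.single_add,
      Finsupp.tsub_apply, Finsupp.single_eq_same, Nat.descFactorial_succ]
    push_cast
    ring_nf

lemma list_prod_iterate_pderiv_monomial (α β : Fin n →₀ ℕ) (c : ℂ) (l : List (Fin n))
    (hl : l.Nodup) :
    (l.map fun i => (pderiv i).toLinearMap ^ α i).prod (monomial β c) =
      monomial (β - (l.map fun i => Finsupp.single i (α i)).sum)
        ((l.map fun i => (β i).descFactorial (α i)).prod * c) := by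
  induction l with
  | nil => simp
  | cons i l ih =>
    obtain ⟨hil, hl⟩ := List.nodup_cons.mp hl
    have hβi : (β - (l.map fun j => Finsupp.single j (α j)).sum) i = β i := by
      rw [Finsupp.tsub_apply, ← Finsupp.applyAddHom_apply (a := i) (List.sum _), map_list_sum,
        List.map_map, List.sum_eq_zero, Nat.sub_zero]
      intro x hx
      obtain ⟨j, hj, rfl⟩ := List.mem_map.mp hx
      exact Finsupp.single_eq_of_ne (fun h => hil (h ▸ hj))
    rw [List.map_cons, List.prod_cons, Module.End.mul_apply, ih hl, Module.End.pow_apply,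
      Derivation.coeFn_coe, iterate_pderiv_monomial, hβi, tsub_tsub, List.map_cons,
      List.sum_cons, add_comm, List.map_cons, List.prod_cons]
    push_cast
    ring_nf

lemma diffOp_monomial (α β : Fin n →₀ ℕ) (c : ℂ) :
    diffOp α (monomial β c) =
      monomial (β - α) ((∏ i, (β i).descFactorial (α i) : ℕ) * c) := by
  rw [diffOp_eq_diffOpLinear, diffOpLinear,
    list_prod_iterate_pderiv_monomial α β c _ (List.nodup_finRange n), ← Fin.prod_univ_def]
  congr
  rw [← Fin.sum_univ_def]
  ext j
  simp

lemma coeff_zero_apolar_monomial {d : ℕ} (α : Fin n →₀ ℕ) (hα : α.degree = d)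
    {g : MvPolynomial (Fin n) ℂ} (hg : g.IsHomogeneous d) :
    coeff 0 (apolar (monomial α 1) g) = (∏ i, (α i).factorial : ℕ) * coeff α g := by
  rw [apolar, support_monomial, if_neg one_ne_zero, Finset.sum_singleton, coeff_monomial,
    if_pos rfl, one_smul]
  conv_lhs => rw [g.as_sum, diffOp_eq_diffOpLinear, map_sum, coeff_sum]
  rw [Finset.sum_eq_single α]
  · rw [← diffOp_eq_diffOpLinear, diffOp_monomial, tsub_self, coeff_monomial, if_pos rfl]
    simp [Nat.descFactorial_self]
  · intro β hβ hβα
    rw [← diffOp_eq_diffOpLinear, diffOp_monomial, coeff_monomial, if_neg]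
    intro h
    have hle : β ≤ α := tsub_eq_zero_iff_le.mp h
    have hβd : β.degree = α.degree := by
      rw [hα, ← hg (mem_support_iff.mp hβ), Finsupp.degree_eq_weight_one]; rfl
    have hdiff : (α - β).degree = 0 := by
      have := map_add Finsupp.degree β (α - β)
      rw [add_tsub_cancel_of_le hle] at this
      omega
    exact hβα (le_antisymm hle (tsub_eq_zero_iff_le.mp ((Finsupp.degree_eq_zero_iff _).mp hdiff)))
  · intro hα'
    rw [notMem_support_iff.mp hα', monomial_zero, map_zero, coeff_zero]

lemma eq_zero_of_forall_coeff_zero_apolar {d : ℕ} {g : MvPolynomial (Fin n) ℂ}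
    (hg : g.IsHomogeneous d)
    (h : ∀ G : MvPolynomial (Fin n) ℂ, G.IsHomogeneous d → coeff 0 (apolar G g) = 0) :
    g = 0 := by
  ext α
  rw [coeff_zero]
  by_cases hα : α.degree = d
  · have h1 := h (monomial α 1) (isHomogeneous_monomial 1 hα)
    rw [coeff_zero_apolar_monomial α hα hg] at h1
    exact (mul_eq_zero.mp h1).resolve_left
      (by simp [Finset.prod_eq_zero_iff, Nat.factorial_ne_zero])
  · exact hg.coeff_eq_zero hα

end ApolarAction

section LinearForms

variable {n : ℕ}

lemma eval_lin (u a : Fin (n + 1) → ℂ) : eval u (lin a) = ∑ i, a i * u i := by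
  simp [lin]

lemma isHomogeneous_lin (a : Fin (n + 1) → ℂ) : (lin a).IsHomogeneous 1 :=
  IsHomogeneous.sum _ _ _ fun i _ => by
    simpa using (isHomogeneous_C _ (a i)).mul (isHomogeneous_X ℂ i)

lemma isHomogeneous_lin_pow (a : Fin (n + 1) → ℂ) (d : ℕ) : (lin a ^ d).IsHomogeneous d := by
  simpa using (isHomogeneous_lin a).pow d

lemma lin_smul (z : ℂ) (u : Fin (n + 1) → ℂ) : lin (z • u) = z • lin u := by
  simp only [lin, Finset.smul_sum, smul_eq_C_mul, Pi.smul_apply, smul_eq_mul, map_mul, mul_assoc]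

lemma pderiv_lin (i : Fin (n + 1)) (a : Fin (n + 1) → ℂ) : pderiv i (lin a) = C (a i) := by
  simp [lin, pderiv_X, Pi.single_apply]

lemma iterate_pderiv_lin_pow (i : Fin (n + 1)) (a : Fin (n + 1) → ℂ) (t m : ℕ) :
    (pderiv i)^[t] (lin a ^ m) = ((m.descFactorial t : ℂ) * a i ^ t) • lin a ^ (m - t) := by
  induction t with
  | zero => simp
  | succ t ih =>
    rw [Function.iterate_succ_apply', ih, Derivation.map_smul, pderiv_pow, pderiv_lin, Nat.sub_sub,
      Nat.descFactorial_succ, smul_eq_C_mul, smul_eq_C_mul]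
    push_cast
    simp only [map_mul, map_pow, map_natCast]
    ring

lemma list_prod_iterate_pderiv_lin_pow (α : Fin (n + 1) →₀ ℕ) (a : Fin (n + 1) → ℂ) (m : ℕ)
    (l : List (Fin (n + 1))) :
    (l.map fun i => (pderiv i).toLinearMap ^ α i).prod (lin a ^ m) =
      ((m.descFactorial (l.map α).sum : ℂ) * (l.map fun i => a i ^ α i).prod) •
        lin a ^ (m - (l.map α).sum) := by
  induction l with
  | nil => simp
  | cons i l ih =>
    rw [List.map_cons, List.prod_cons, Module.End.mul_apply, ih, map_smul, Module.End.pow_apply,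
      Derivation.coeFn_coe, iterate_pderiv_lin_pow, smul_smul, Nat.sub_sub, List.map_cons,
      List.sum_cons, add_comm (α i), List.map_cons, List.prod_cons,
      ← Nat.descFactorial_mul_descFactorial (Nat.le_add_right _ (α i)), Nat.add_sub_cancel_left]
    push_cast
    ring_nf

lemma diffOp_lin_pow (α : Fin (n + 1) →₀ ℕ) (a : Fin (n + 1) → ℂ) (m : ℕ) :
    diffOp α (lin a ^ m) =
      ((m.descFactorial α.degree : ℂ) * ∏ i, a i ^ α i) • lin a ^ (m - α.degree) := by
  rw [diffOp_eq_diffOpLinear, diffOpLinear, list_prod_iterate_pderiv_lin_pow,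
    Finsupp.degree_eq_sum, Fin.sum_univ_def, Fin.prod_univ_def]

lemma apolar_lin_pow {k : ℕ} {G : MvPolynomial (Fin (n + 1)) ℂ} (hG : G.IsHomogeneous k)
    (a : Fin (n + 1) → ℂ) (d : ℕ) :
    apolar G (lin a ^ d) = ((d.descFactorial k : ℂ) * eval a G) • lin a ^ (d - k) := by
  have hdeg : ∀ α ∈ G.support, α.degree = k := fun α hα => by
    rw [← hG (mem_support_iff.mp hα), Finsupp.degree_eq_weight_one]; rfl
  rw [apolar, Finset.sum_congr rfl fun α hα => by rw [diffOp_lin_pow, hdeg α hα, smul_smul],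
    ← Finset.sum_smul, eval_eq', Finset.mul_sum]
  congr 1
  exact Finset.sum_congr rfl fun α _ => by ring

lemma apolar_sum_smul_linOf_pow {k d : ℕ} {G : MvPolynomial (Fin (n + 1)) ℂ}
    (hG : G.IsHomogeneous k) (A : Finset (Pt n)) (c : Pt n → ℂ) :
    apolar G (∑ p ∈ A, c p • linOf p ^ d) =
      ∑ p ∈ A, (c p * d.descFactorial k * eval p.rep G) • linOf p ^ (d - k) := by
  simp only [apolar_sum_right, apolar_smul_right, linOf, apolar_lin_pow hG, smul_smul, mul_assoc]

lemma coeff_zero_apolar_sum_smul_linOf_pow {m : ℕ} {G : MvPolynomial (Fin (n + 1)) ℂ}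
    (hG : G.IsHomogeneous m) (A : Finset (Pt n)) (c : Pt n → ℂ) :
    coeff 0 (apolar G (∑ p ∈ A, c p • linOf p ^ m)) =
      m.factorial * ∑ p ∈ A, c p * eval p.rep G := by
  rw [apolar_sum_smul_linOf_pow hG, coeff_sum, Finset.mul_sum]
  refine Finset.sum_congr rfl fun p _ => ?_
  rw [Nat.sub_self, pow_zero, coeff_smul, coeff_zero_one, Nat.descFactorial_self]
  ring

end LinearForms

section Separation

variable {n : ℕ}

lemma exists_lin_eq_one_of_notMem {U : Submodule ℂ (Fin (n + 1) → ℂ)} {v : Fin (n + 1) → ℂ}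
    (hv : v ∉ U) : ∃ a, eval v (lin a) = 1 ∧ ∀ u ∈ U, eval u (lin a) = 0 := by
  obtain ⟨φ, hφv, hUφ⟩ := Submodule.exists_le_ker_of_notMem hv
  have heval : ∀ u, eval u (lin fun i => (φ v)⁻¹ * φ fun j => if i = j then 1 else 0) =
      (φ v)⁻¹ * φ u := fun u => by
    rw [eval_lin, LinearMap.pi_apply_eq_sum_univ φ u, Finset.mul_sum]
    exact Finset.sum_congr rfl fun i _ => by rw [smul_eq_mul]; ring
  exact ⟨_, by rw [heval, inv_mul_cancel₀ hφv],
    fun u hu => by rw [heval, LinearMap.mem_ker.mp (hUφ hu), mul_zero]⟩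

def SeparatedInDegree (m : ℕ) (W : Finset (Pt n)) (z : Pt n) : Prop :=
  ∃ G : MvPolynomial (Fin (n + 1)) ℂ, G.IsHomogeneous m ∧ eval z.rep G ≠ 0 ∧
    ∀ w ∈ W, eval w.rep G = 0

lemma separatedInDegree_zero_empty (z : Pt n) : SeparatedInDegree 0 ∅ z :=
  ⟨1, isHomogeneous_one _ _, by simp, by simp⟩

lemma separatedInDegree_one_pair {u v z : Pt n}
    (h : z.rep ∉ Submodule.span ℂ {u.rep, v.rep}) : SeparatedInDegree 1 {u, v} z := by
  obtain ⟨a, ha, h0⟩ := exists_lin_eq_one_of_notMem h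
  refine ⟨lin a, isHomogeneous_lin a, by simp [ha], fun w hw => h0 _ ?_⟩
  rcases Finset.mem_insert.mp hw with rfl | hw
  · exact Submodule.subset_span (by simp)
  · exact Submodule.subset_span (by simp [Finset.mem_singleton.mp hw])

namespace SeparatedInDegree

variable {m m' : ℕ} {W W' : Finset (Pt n)} {z : Pt n}

lemma union (h : SeparatedInDegree m W z) (h' : SeparatedInDegree m' W' z) :
    SeparatedInDegree (m + m') (W ∪ W') z := by
  obtain ⟨G, hG, hGz, hGW⟩ := h
  obtain ⟨G', hG', hG'z, hG'W⟩ := h'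
  refine ⟨G * G', hG.mul hG', by simp [hGz, hG'z], fun w hw => ?_⟩
  rcases Finset.mem_union.mp hw with hw | hw
  · simp [hGW w hw]
  · simp [hG'W w hw]

lemma mono (h : SeparatedInDegree m W z) (hm : m ≤ m') (hW : W' ⊆ W) :
    SeparatedInDegree m' W' z := by
  obtain ⟨G, hG, hGz, hGW⟩ := h
  obtain ⟨a, ha, -⟩ := exists_lin_eq_one_of_notMem (U := ⊥) (v := z.rep)
    (by simpa using z.rep_nonzero)
  refine ⟨G * lin a ^ (m' - m), ?_, by simp [hGz, ha], fun w hw => by simp [hGW w (hW hw)]⟩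
  simpa [Nat.add_sub_cancel' hm] using hG.mul (isHomogeneous_lin_pow a (m' - m))

end SeparatedInDegree

lemma eq_zero_of_sum_smul_linOf_pow_eq {m : ℕ} {A A' : Finset (Pt n)} {a b : Pt n → ℂ}
    (h : ∑ p ∈ A, a p • linOf p ^ m = ∑ p ∈ A', b p • linOf p ^ m) {z : Pt n}
    (hzA' : z ∈ A') (hsep : SeparatedInDegree m (A ∪ A'.erase z) z) :
    b z = 0 := by
  obtain ⟨G, hG, hGz, hGW⟩ := hsep
  have hpair := congrArg (fun g => coeff 0 (apolar G g)) h
  simp only [coeff_zero_apolar_sum_smul_linOf_pow hG] at hpair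
  rw [Finset.sum_eq_zero fun p hp => by rw [hGW p (Finset.mem_union_left _ hp), mul_zero],
    Finset.sum_eq_single_of_mem z hzA' fun p hp hpz => by
      rw [hGW p (Finset.mem_union_right _ (Finset.mem_erase.mpr ⟨hpz, hp⟩)), mul_zero]] at hpair
  simpa [Nat.factorial_ne_zero, hGz] using hpair.symm

lemma exists_eq_sum_smul_linOf_pow {d : ℕ} {f : MvPolynomial (Fin (n + 1)) ℂ}
    (hf : f.IsHomogeneous d) {A : Finset (Pt n)} (hA : isApolar f A)
    (hsep : ∀ p ∈ A, SeparatedInDegree d (A.erase p) p) :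
    ∃ c : Pt n → ℂ, f = ∑ p ∈ A, c p • linOf p ^ d := by
  choose! U hU hUp hUq using hsep
  set V : Pt n → MvPolynomial (Fin (n + 1)) ℂ := fun p => (eval p.rep (U p))⁻¹ • U p
  have hV : ∀ p ∈ A, (V p).IsHomogeneous d := fun p hp =>
    Submodule.smul_mem (homogeneousSubmodule _ ℂ d) _ (hU p hp)
  have hVeval : ∀ p ∈ A, ∀ q ∈ A, eval q.rep (V p) = if q = p then 1 else 0 := by
    intro p hp q hq
    split_ifs with hqp
    · simp [V, hqp, hUp p hp]
    · simp [V, hUq p hp q (Finset.mem_erase.mpr ⟨hqp, hq⟩)]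
  refine ⟨fun p => (d.factorial : ℂ)⁻¹ * coeff 0 (apolar (V p) f), ?_⟩
  rw [← sub_eq_zero]
  refine eq_zero_of_forall_coeff_zero_apolar (d := d)
    (Submodule.sub_mem (homogeneousSubmodule _ ℂ d) hf (Submodule.sum_mem _ fun p _ =>
      Submodule.smul_mem _ _ (isHomogeneous_lin_pow _ d))) fun G hG => ?_
  -- `G` agrees on `A` with its interpolant `S`, so `G - S ∈ I_A ⊆ f^⊥`
  set S := ∑ p ∈ A, eval p.rep G • V p
  have hR : apolar (G - S) f = 0 := by
    refine hA _ (Ideal.subset_span ⟨⟨d, Submodule.sub_mem (homogeneousSubmodule _ ℂ d) hG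
      (Submodule.sum_mem _ fun p hp => Submodule.smul_mem _ _ (hV p hp))⟩, fun q hq => ?_⟩)
    rw [map_sub, map_sum, Finset.sum_congr rfl fun p hp => by
      rw [smul_eval, hVeval p hp q hq]]
    simp [Finset.mem_coe.mp hq]
  have hGf : coeff 0 (apolar G f) = ∑ p ∈ A, eval p.rep G * coeff 0 (apolar (V p) f) := by
    have hGS := apolar_add (G - S) S f
    rw [sub_add_cancel, hR, zero_add] at hGS
    rw [hGS, apolar_sum_left, coeff_sum]
    simp only [apolar_smul, coeff_smul, smul_eq_mul]
  rw [apolar_eq_apolarLinear, map_sub, ← apolar_eq_apolarLinear, ← apolar_eq_apolarLinear,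
    coeff_sub, coeff_zero_apolar_sum_smul_linOf_pow hG, hGf, sub_eq_zero, Finset.mul_sum]
  refine Finset.sum_congr rfl fun p _ => ?_
  field_simp [Nat.factorial_ne_zero]

end Separation

section Rank

variable {n d : ℕ} {f : MvPolynomial (Fin (n + 1)) ℂ} {A : Finset (Pt n)} {c : Pt n → ℂ}

lemma wrank_le_card (hd : 0 < d) (h : f = ∑ p ∈ A, c p • linOf p ^ d) : wrank d f ≤ A.card := by
  choose r hr using fun p => IsAlgClosed.exists_pow_nat_eq (c p) hd
  refine Nat.sInf_le ⟨fun i => r (A.equivFin.symm i) • (A.equivFin.symm i : Pt n).rep, ?_⟩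
  rw [h, ← Finset.sum_coe_sort A, ← Equiv.sum_comp A.equivFin.symm]
  simp [lin_smul, smul_pow, hr, linOf]

lemma coeff_ne_zero_of_wrank_eq_card (hd : 0 < d) (h : f = ∑ p ∈ A, c p • linOf p ^ d)
    (hrk : wrank d f = A.card) : ∀ p ∈ A, c p ≠ 0 := by
  intro p hp hcp
  have hle := wrank_le_card (f := f) (A := A.erase p) (c := c) hd
    (by rw [h, ← Finset.add_sum_erase A _ hp, hcp, zero_smul, zero_add])
  rw [hrk, Finset.card_erase_of_mem hp] at hle
  have := Finset.card_pos.mpr ⟨p, hp⟩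
  omega

end Rank

section Lines

variable {n : ℕ}

def lineThrough (z w : Pt n) : Submodule ℂ (Fin (n + 1) → ℂ) :=
  Submodule.span ℂ {z.rep, w.rep}

lemma rep_notMem_span_singleton {u z : Pt n} (h : u ≠ z) : z.rep ∉ Submodule.span ℂ {u.rep} := by
  intro hz
  obtain ⟨a, ha⟩ := Submodule.mem_span_singleton.mp hz
  refine h (Eq.symm ?_)
  simpa using (Projectivization.mk_eq_mk_iff' ℂ z.rep u.rep z.rep_nonzero u.rep_nonzero).mpr
    ⟨a, ha⟩

lemma lineThrough_le_of_mem_span_pair {u v z : Pt n} (hu : u ≠ z)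
    (h : z.rep ∈ Submodule.span ℂ {u.rep, v.rep}) : lineThrough z v ≤ lineThrough z u := by
  rw [lineThrough, Submodule.span_le, Set.insert_subset_iff, Set.singleton_subset_iff]
  exact ⟨Submodule.subset_span (by simp), mem_span_insert_exchange
    (by rwa [Set.pair_comm]) (rep_notMem_span_singleton hu)⟩

lemma separatedInDegree_one_of_lineThrough_ne {u v z : Pt n} (hu : u ≠ z) (hv : v ≠ z)
    (h : u = v ∨ lineThrough z u ≠ lineThrough z v) : SeparatedInDegree 1 {u, v} z := by
  refine separatedInDegree_one_pair fun hz => ?_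
  rcases h with rfl | h
  · exact rep_notMem_span_singleton hu (by simpa using hz)
  · exact h (le_antisymm (lineThrough_le_of_mem_span_pair hv (by rwa [Set.pair_comm]))
      (lineThrough_le_of_mem_span_pair hu hz))

end Lines

section Pairing

variable {α β : Type*}

-- The numerical condition under which `W` splits into `k` blocks, each a single point or a pair
-- with distinct values of `π`.
def FiberBounded (π : α → β) (k : ℕ) (W : Finset α) : Prop :=
  W.card ≤ 2 * k ∧ ∀ w ∈ W, (W.filter (π · = π w)).card ≤ k

lemma card_filter_add_card_filter_add_card_filter_le (π : α → β) (W : Finset α) {x y w : α}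
    (hxy : π x ≠ π y) (hxw : π x ≠ π w) (hyw : π y ≠ π w) :
    (W.filter (π · = π x)).card + (W.filter (π · = π y)).card +
      (W.filter (π · = π w)).card ≤ W.card := by
  have hdisj : ∀ {a b}, π a ≠ π b → Disjoint (W.filter (π · = π a)) (W.filter (π · = π b)) :=
    fun hab => Finset.disjoint_filter.mpr fun p _ h1 h2 => hab (h1.symm.trans h2)
  rw [← Finset.card_union_of_disjoint (hdisj hxy),
    ← Finset.card_union_of_disjoint (Finset.disjoint_union_left.mpr ⟨hdisj hxw, hdisj hyw⟩)]
  exact Finset.card_le_card (Finset.union_subset (Finset.union_subset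
    (Finset.filter_subset _ _) (Finset.filter_subset _ _)) (Finset.filter_subset _ _))

lemma card_filter_erase_erase_lt (π : α → β) {W : Finset α} {u v x w : α} (hxW : x ∈ W)
    (hx : x = u ∨ x = v) (hwx : π w = π x) :
    (((W.erase u).erase v).filter (π · = π w)).card < (W.filter (π · = π x)).card := by
  refine Finset.card_lt_card ⟨Finset.filter_subset_filter _
    ((Finset.erase_subset _ _).trans (Finset.erase_subset _ _)) |>.trans ?_, fun h => ?_⟩
  · exact fun p hp => Finset.mem_filter.mpr ⟨(Finset.mem_filter.mp hp).1,
      (Finset.mem_filter.mp hp).2.trans hwx⟩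
  · have := h (Finset.mem_filter.mpr ⟨hxW, rfl⟩)
    rcases hx with rfl | rfl <;> simp at this

lemma FiberBounded.exists_erase_pair {π : α → β} {k : ℕ} {W : Finset α}
    (h : FiberBounded π (k + 1) W) (hne : W.Nonempty) :
    ∃ u ∈ W, ∃ v ∈ W, (u = v ∨ π u ≠ π v) ∧ FiberBounded π k ((W.erase u).erase v) := by
  obtain ⟨hW, hfib⟩ := h
  obtain ⟨u, hu, humax⟩ := W.exists_max_image (fun w => (W.filter (π · = π w)).card) hne
  by_cases hall : ∀ v ∈ W, π v = π u
  · have hWu : W.card ≤ k + 1 := by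
      simpa [Finset.filter_true_of_mem hall] using hfib u hu
    have hcard : ((W.erase u).erase u).card ≤ k := by
      rw [Finset.erase_idem, Finset.card_erase_of_mem hu]
      omega
    exact ⟨u, hu, u, hu, Or.inl rfl, by omega,
      fun w _ => (Finset.card_filter_le _ _).trans hcard⟩
  push Not at hall
  obtain ⟨v0, hv0, hv0u⟩ := hall
  obtain ⟨v, hv, hvmax⟩ := (W.filter (π · ≠ π u)).exists_max_image
    (fun w => (W.filter (π · = π w)).card) ⟨v0, Finset.mem_filter.mpr ⟨hv0, hv0u⟩⟩
  obtain ⟨hvW, hvu⟩ := Finset.mem_filter.mp hv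
  have hne : v ≠ u := fun h => hvu (congrArg π h)
  refine ⟨u, hu, v, hvW, Or.inr (Ne.symm hvu), ?_, fun w hw => ?_⟩
  · rw [Finset.card_erase_of_mem (Finset.mem_erase.mpr ⟨hne, hvW⟩), Finset.card_erase_of_mem hu]
    omega
  obtain ⟨hwv, hwu, hwW⟩ : w ≠ v ∧ w ≠ u ∧ w ∈ W := by simpa using hw
  have hvu_card := humax v hvW
  have hu_card := hfib u hu
  by_cases hwu' : π w = π u
  · have := card_filter_erase_erase_lt π hu (Or.inl rfl) hwu' (v := v)
    omega
  by_cases hwv' : π w = π v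
  · have := card_filter_erase_erase_lt π hvW (Or.inr rfl) hwv' (u := u)
    omega
  have hw_card := hvmax w (Finset.mem_filter.mpr ⟨hwW, hwu'⟩)
  have hsum := card_filter_add_card_filter_add_card_filter_le π W (Ne.symm hvu) (Ne.symm hwu')
    (Ne.symm hwv')
  have hsub : (((W.erase u).erase v).filter (π · = π w)).card ≤ (W.filter (π · = π w)).card :=
    Finset.card_le_card (Finset.filter_subset_filter _
      ((Finset.erase_subset _ _).trans (Finset.erase_subset _ _)))
  omega

end Pairing

lemma separatedInDegree_of_fiberBounded {n k : ℕ} {z : Pt n} {W : Finset (Pt n)} (hz : z ∉ W)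
    (h : FiberBounded (lineThrough z) k W) : SeparatedInDegree k W z := by
  induction k generalizing W with
  | zero =>
    obtain rfl : W = ∅ := Finset.card_eq_zero.mp (by simpa using h.1)
    exact separatedInDegree_zero_empty z
  | succ k ih =>
    rcases W.eq_empty_or_nonempty with rfl | hne
    · exact (separatedInDegree_zero_empty z).mono (Nat.zero_le _) subset_rfl
    obtain ⟨u, hu, v, hv, huv, h'⟩ := h.exists_erase_pair hne
    have hW : W ⊆ (W.erase u).erase v ∪ {u, v} := fun w hw => by
      by_cases w = u <;> by_cases w = v <;> simp_all
    exact ((ih (fun hz' => hz (Finset.mem_of_mem_erase (Finset.mem_of_mem_erase hz'))) h').union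
      (separatedInDegree_one_of_lineThrough_ne (ne_of_mem_of_not_mem hu hz)
        (ne_of_mem_of_not_mem hv hz) huv)).mono le_rfl hW

lemma separatedInDegree_card {n : ℕ} {z : Pt n} {W : Finset (Pt n)} (hz : z ∉ W) :
    SeparatedInDegree W.card W z :=
  separatedInDegree_of_fiberBounded hz ⟨by omega, fun _ _ => Finset.card_filter_le _ _⟩

def LineBounded (k : ℕ) (W : Finset (Pt 2)) : Prop :=
  ∀ L : MvPolynomial (Fin 3) ℂ, L.IsHomogeneous 1 → L ≠ 0 →
    (W.filter fun p => eval p.rep L = 0).card ≤ k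

lemma LineBounded.insert {k : ℕ} {W : Finset (Pt 2)} (h : LineBounded k W) (z : Pt 2) :
    LineBounded (k + 1) (insert z W) := fun L hL hL0 => by
  rw [Finset.filter_insert]
  split_ifs
  · exact (Finset.card_insert_le _ _).trans (Nat.add_le_add_right (h L hL hL0) 1)
  · exact (h L hL hL0).trans (Nat.le_succ k)

lemma exists_line_through (z w : Pt 2) :
    ∃ L : MvPolynomial (Fin 3) ℂ, L.IsHomogeneous 1 ∧ L ≠ 0 ∧ eval z.rep L = 0 ∧
      ∀ p : Pt 2, lineThrough z p = lineThrough z w → eval p.rep L = 0 := by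
  have hrank : Module.finrank ℂ (lineThrough z w) < Module.finrank ℂ (Fin 3 → ℂ) := by
    refine (finrank_span_le_card ({z.rep, w.rep} : Set (Fin 3 → ℂ))).trans_lt ?_
    rw [Module.finrank_fin_fun, Set.toFinset_insert, Set.toFinset_singleton]
    exact (Finset.card_le_two (a := z.rep) (b := w.rep)).trans_lt (by norm_num)
  obtain ⟨v, -, hv⟩ := SetLike.exists_of_lt (Submodule.lt_top_of_finrank_lt_finrank hrank)
  obtain ⟨a, ha, h0⟩ := exists_lin_eq_one_of_notMem hv
  refine ⟨lin a, isHomogeneous_lin a, fun h => by simp [h] at ha,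
    h0 _ (Submodule.subset_span (by simp)), fun p hp => h0 _ ?_⟩
  exact hp ▸ Submodule.subset_span (by simp)

lemma separatedInDegree_of_lineBounded {k : ℕ} {z : Pt 2} {W : Finset (Pt 2)}
    (h : LineBounded (k + 1) (insert z W)) (hz : z ∉ W) (hcard : W.card ≤ 2 * k) :
    SeparatedInDegree k W z := by
  refine separatedInDegree_of_fiberBounded hz ⟨hcard, fun w _ => ?_⟩
  obtain ⟨L, hL, hL0, hLz, hLp⟩ := exists_line_through z w
  have hsub : insert z (W.filter (lineThrough z · = lineThrough z w)) ⊆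
      (insert z W).filter fun p => eval p.rep L = 0 := by
    intro p hp
    rcases Finset.mem_insert.mp hp with rfl | hp
    · simp [hLz]
    · obtain ⟨hpW, hpw⟩ := Finset.mem_filter.mp hp
      simp [hpW, hLp p hpw]
  have := (Finset.card_le_card hsub).trans (h L hL hL0)
  rwa [Finset.card_insert_of_notMem fun h' => hz (Finset.mem_filter.mp h').1,
    Nat.add_le_add_iff_right] at this

lemma apolar_ne_zero_of_HF_one {n : ℕ} {f : MvPolynomial (Fin n) ℂ} (hconc : HF f 1 = n)
    {L : MvPolynomial (Fin n) ℂ} (hL : L.IsHomogeneous 1) (hL0 : L ≠ 0) : apolar L f ≠ 0 := by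
  intro hLf
  have hspan := homogeneousSubmodule_one_eq_span_X (σ := Fin n) (R := ℂ)
  have : Module.Finite ℂ (homogeneousSubmodule (Fin n) ℂ 1) := by
    rw [hspan]
    exact FiniteDimensional.span_of_finite ℂ (Set.finite_range _)
  have hT : Module.finrank ℂ (homogeneousSubmodule (Fin n) ℂ 1) ≤ n := by
    rw [hspan]
    exact (finrank_range_le_card _).trans (by simp)
  have hle : perpSub f 1 ≤ homogeneousSubmodule (Fin n) ℂ 1 := fun G hG => hG.1
  have : Module.Finite ℂ (perpSub f 1) := Submodule.finiteDimensional_of_le hle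
  have hpos : 0 < Module.finrank ℂ (perpSub f 1) := Module.finrank_pos_iff_exists_ne_zero.mpr
    ⟨⟨L, hL, hLf⟩, fun h => hL0 (congrArg Subtype.val h)⟩
  have hmono := Submodule.finrank_mono hle
  rw [HF] at hconc
  omega

lemma lineBounded_three_image {ι : Type*} [Fintype ι] (Q : ι → Pt 2)
    (hgen : ∀ i j k l : ι, i ≠ j → i ≠ k → i ≠ l → j ≠ k → j ≠ l → k ≠ l →
      ¬∃ L : MvPolynomial (Fin 3) ℂ, L.IsHomogeneous 1 ∧ L ≠ 0 ∧
        eval (Q i).rep L = 0 ∧ eval (Q j).rep L = 0 ∧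
        eval (Q k).rep L = 0 ∧ eval (Q l).rep L = 0) :
    LineBounded 3 (Finset.univ.image Q) := by
  intro L hL hL0
  by_contra! hcard
  rw [Finset.filter_image] at hcard
  obtain ⟨t, hts, ht⟩ := Finset.exists_subset_card_eq (hcard.trans_le Finset.card_image_le)
  obtain ⟨i, j, k, l, hij, hik, hil, hjk, hjl, hkl, rfl⟩ := Finset.card_eq_four.mp ht
  have hvan : ∀ m ∈ ({i, j, k, l} : Finset ι), eval (Q m).rep L = 0 := fun m hm =>
    (Finset.mem_filter.mp (hts hm)).2
  exact hgen i j k l hij hik hil hjk hjl hkl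
    ⟨L, hL, hL0, hvan i (by simp), hvan j (by simp), hvan k (by simp), hvan l (by simp)⟩

lemma exists_eq_sum_smul_linOf_pow_of_card_le {n d : ℕ} {f : MvPolynomial (Fin (n + 1)) ℂ}
    (hf : f.IsHomogeneous d) {A : Finset (Pt n)} (hA : isApolar f A) (hcard : A.card ≤ d + 1) :
    ∃ c : Pt n → ℂ, f = ∑ p ∈ A, c p • linOf p ^ d :=
  exists_eq_sum_smul_linOf_pow hf hA fun p hp =>
    (separatedInDegree_card (Finset.notMem_erase p A)).mono
      (by rw [Finset.card_erase_of_mem hp]; omega) subset_rfl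

lemma subset_of_lineBounded {d : ℕ} (hd : 5 ≤ d) {X B : Finset (Pt 2)} (hX : LineBounded 3 X)
    (hXcard : X.card ≤ 6) (hB : LineBounded 3 B) (hBcard : B.card ≤ 5) {a b : Pt 2 → ℂ}
    (h : ∑ p ∈ X, a p • linOf p ^ d = ∑ p ∈ B, b p • linOf p ^ d) (hb0 : ∀ y ∈ B, b y ≠ 0) :
    B ⊆ X := by
  intro z hzB
  by_contra hzX
  refine hb0 z hzB (eq_zero_of_sum_smul_linOf_pow_eq h hzB ?_)
  have hBz : LineBounded (2 + 1) (insert z (B.erase z)) := by rwa [Finset.insert_erase hzB]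
  exact ((separatedInDegree_of_lineBounded (hX.insert z) hzX (by omega)).union
    (separatedInDegree_of_lineBounded hBz (Finset.notMem_erase z B)
      (by rw [Finset.card_erase_of_mem hzB]; omega))).mono (by omega) subset_rfl

lemma false_of_sum_eq_smul_pow {m : ℕ} (hm : 4 ≤ m) {X : Finset (Pt 2)} (hX : LineBounded 3 X)
    (hXcard : X.card ≤ 5) {e : Pt 2 → ℂ} {e₀ : ℂ} {y : Pt 2}
    (h : ∑ x ∈ X, e x • linOf x ^ m = e₀ • linOf y ^ m) (he₀ : e₀ ≠ 0)
    (hsupp : 1 < (X.filter (e · ≠ 0)).card) : False := by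
  by_cases hy : y ∈ X
  · obtain ⟨x, hx, hxy⟩ := Finset.exists_mem_ne hsupp y
    obtain ⟨hxX, hex⟩ := Finset.mem_filter.mp hx
    refine hex (eq_zero_of_sum_smul_linOf_pow_eq (A := {y}) (a := fun _ => e₀)
      (by rw [Finset.sum_singleton, h]) hxX ?_)
    rw [Finset.union_eq_right.mpr (Finset.singleton_subset_iff.mpr
      (Finset.mem_erase.mpr ⟨Ne.symm hxy, hy⟩))]
    exact (separatedInDegree_card (Finset.notMem_erase x X)).mono
      (by rw [Finset.card_erase_of_mem hxX]; omega) subset_rfl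
  · refine he₀ (eq_zero_of_sum_smul_linOf_pow_eq (A' := {y}) (b := fun _ => e₀)
      (h.trans (Finset.sum_singleton (fun p => e₀ • linOf p ^ m) y).symm)
      (Finset.mem_singleton_self y) ?_)
    exact (separatedInDegree_of_lineBounded (hX.insert y) hy (by omega)).mono (by omega)
      (by rw [Finset.erase_singleton, Finset.union_empty])

lemma exists_unique_off_line {f : MvPolynomial (Fin 3) ℂ} (hconc : HF f 1 = 3)
    {B : Finset (Pt 2)} (hB : isApolar f B) {L : MvPolynomial (Fin 3) ℂ}
    (hL : L.IsHomogeneous 1) (hL0 : L ≠ 0)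
    (hLB : B.card ≤ (B.filter fun p => eval p.rep L = 0).card + 1) :
    ∃ y ∈ B, eval y.rep L ≠ 0 ∧ ∀ p ∈ B, p ≠ y → eval p.rep L = 0 := by
  have hoff : (B.filter fun p => ¬eval p.rep L = 0).card ≤ 1 := by
    have := Finset.card_filter_add_card_filter_not (s := B) fun p => eval p.rep L = 0
    omega
  obtain ⟨y, hy⟩ : (B.filter fun p => ¬eval p.rep L = 0).Nonempty := by
    by_contra hempty
    rw [Finset.not_nonempty_iff_eq_empty, Finset.filter_eq_empty_iff] at hempty
    exact apolar_ne_zero_of_HF_one hconc hL hL0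
      (hB L (Ideal.subset_span ⟨⟨1, hL⟩, fun p hp => not_not.mp (hempty hp)⟩))
  obtain ⟨hyB, hyL⟩ := Finset.mem_filter.mp hy
  refine ⟨y, hyB, hyL, fun p hp hpy => by_contra fun hpL => hpy ?_⟩
  exact Finset.card_le_one.mp hoff p (Finset.mem_filter.mpr ⟨hp, hpL⟩) y hy

lemma false_of_not_lineBounded {d : ℕ} (hd : 5 ≤ d) {f : MvPolynomial (Fin 3) ℂ}
    (hconc : HF f 1 = 3) {X B : Finset (Pt 2)} (hX : LineBounded 3 X) (hXcard : X.card = 5)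
    (hBap : isApolar f B) (hBcard : B.card = 5) (hB : ¬LineBounded 3 B) {a b : Pt 2 → ℂ}
    (ha : f = ∑ p ∈ X, a p • linOf p ^ d) (hb : f = ∑ p ∈ B, b p • linOf p ^ d)
    (ha0 : ∀ x ∈ X, a x ≠ 0) (hb0 : ∀ y ∈ B, b y ≠ 0) : False := by
  obtain ⟨L, hL, hL0, hLB⟩ : ∃ L : MvPolynomial (Fin 3) ℂ, L.IsHomogeneous 1 ∧ L ≠ 0 ∧
      3 < (B.filter fun p => eval p.rep L = 0).card := by
    simpa [LineBounded] using hB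
  obtain ⟨y, hyB, hyL, hBL⟩ := exists_unique_off_line hconc hBap hL hL0 (by omega)
  have hLf : ∑ x ∈ X, (a x * d.descFactorial 1 * eval x.rep L) • linOf x ^ (d - 1) =
      (b y * d.descFactorial 1 * eval y.rep L) • linOf y ^ (d - 1) := by
    rw [← apolar_sum_smul_linOf_pow hL, ← ha, hb, apolar_sum_smul_linOf_pow hL,
      Finset.sum_eq_single_of_mem y hyB fun p hp hpy => by rw [hBL p hp hpy, mul_zero, zero_smul]]
  have hd0 : (d.descFactorial 1 : ℂ) ≠ 0 := by
    rw [Nat.descFactorial_one]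
    exact_mod_cast (by omega : d ≠ 0)
  refine false_of_sum_eq_smul_pow (by omega) hX hXcard.le hLf
    (mul_ne_zero (mul_ne_zero (hb0 y hyB) hd0) hyL) ?_
  have hoff := Finset.card_filter_add_card_filter_not (s := X) fun p => eval p.rep L = 0
  have hon := hX L hL hL0
  rw [Finset.filter_congr (q := fun p => ¬eval p.rep L = 0) fun x hx => by
    simp only [ne_eq, mul_eq_zero, ha0 x hx, hd0, false_or]]
  omega

theorem stmt18_general {d : ℕ} (hd : 5 ≤ d) (f : MvPolynomial (Fin 3) ℂ) (hf : f.IsHomogeneous d)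
    (hconc : HF f 1 = 3) (hrk : wrank d f = 5)
    (Q : Fin 5 → Pt 2)
    (hmin : isMinApolar d f (Set.range Q))
    (hgen : ∀ i j k l : Fin 5, i ≠ j → i ≠ k → i ≠ l → j ≠ k → j ≠ l → k ≠ l →
      ¬∃ L : MvPolynomial (Fin 3) ℂ, L.IsHomogeneous 1 ∧ L ≠ 0 ∧
        eval (Q i).rep L = 0 ∧ eval (Q j).rep L = 0 ∧
        eval (Q k).rep L = 0 ∧ eval (Q l).rep L = 0) :
    ∀ B : Set (Pt 2), isMinApolar d f B → B = Set.range Q := by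
  rintro B ⟨hBfin, hBap, hBcard⟩
  obtain ⟨-, hXap, hXcard⟩ := hmin
  lift B to Finset (Pt 2) using hBfin
  have hQ : ((Finset.univ.image Q : Finset (Pt 2)) : Set (Pt 2)) = Set.range Q := by simp
  rw [← hQ] at hXap hXcard ⊢
  rw [Set.ncard_coe_finset, hrk] at hXcard hBcard
  obtain ⟨a, ha⟩ := exists_eq_sum_smul_linOf_pow_of_card_le hf hXap (by omega)
  obtain ⟨b, hb⟩ := exists_eq_sum_smul_linOf_pow_of_card_le hf hBap (by omega)
  have hX := lineBounded_three_image Q hgen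
  have hb0 := coeff_ne_zero_of_wrank_eq_card (by omega) hb (by rw [hrk, hBcard])
  by_cases hB : LineBounded 3 B
  · exact_mod_cast Finset.eq_of_subset_of_card_le
      (subset_of_lineBounded hd hX (by omega) hB (by omega) (ha.symm.trans hb) hb0) (by omega)
  · exact (false_of_not_lineBounded hd hconc hX hXcard hBap hBcard hB ha hb
      (coeff_ne_zero_of_wrank_eq_card (by omega) ha (by rw [hrk, hXcard])) hb0).elim

theorem stmt18 {d : ℕ} (hd : 5 ≤ d) (f : MvPolynomial (Fin 3) ℂ) (hf : f.IsHomogeneous d)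
    (hconc : HF f 1 = 3) (hrk : wrank d f = 5)
    (Q : Fin 5 → Pt 2) (hQinj : Function.Injective Q)
    (hmin : isMinApolar d f (Set.range Q))
    (hgen : ∀ i j k l : Fin 5, i ≠ j → i ≠ k → i ≠ l → j ≠ k → j ≠ l → k ≠ l →
      ¬∃ L : MvPolynomial (Fin 3) ℂ, L.IsHomogeneous 1 ∧ L ≠ 0 ∧
        eval (Q i).rep L = 0 ∧ eval (Q j).rep L = 0 ∧
        eval (Q k).rep L = 0 ∧ eval (Q l).rep L = 0) :
    ∀ B : Set (Pt 2), isMinApolar d f B → B = Set.range Q :=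
  stmt18_general hd f hf hconc hrk Q hmin hgen

end
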